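/- arXiv:2512.15752 — 4 statements merged into one kernel-verified Lean document; each statement's English description precedes it below -/
import Mathlib

section
/- Let N ≥ 2 be an integer and let R̃_{n,N} ∈ (0, 1/2) be the minimum positive root of (1+x)(1−2x)(1−x)^{N−1} − 2x^N = 0. For every real ρ with R̃_{n,N} < ρ < 1/2 there exists a ∈ [0,1) with aρ < 1/2 such that (a−ρ)/(1−aρ) + (1−a²)·a^{N−1}ρ^N/((1−aρ)^N(1−2aρ)) > 1. Consequently, the radius R̃_{n,N} in the first part of the multidimensional Bohr inequality for higher partial derivatives is best possible: this quantity is the value of |f(z)| + Σ_{k=N}^∞ Σ_{|α|=k} (1/α!)|∂^{|α|}f(z)/∂z^α||z|^α for the function f(z) = (a − (z_1+…+z_n))/(1 − a(z_1+…+z_n)) at z = (−r,…,−r) with nr = ρ. -/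
open Topology

/-! Writing `N = M + 1`, the quantity minus one equals `(1 - a) P(a) / ((1 - aρ)^N (1 - 2aρ))` with
`P(a) = (1 + a) a^M ρ^N - (1 + ρ)(1 - aρ)^M (1 - 2aρ)`. At `a = 1`, `P(1) = 2ρ^N - G(ρ)` where
`G(x) = (1 + x)(1 - 2x)(1 - x)^M` is decreasing on `[0, 1/2)` while `2x^N` is increasing; since they
agree at the root `R`, `P(1) > 0` for `ρ > R`, and by continuity `P(a) > 0` for `a < 1` close to `1`. -/

def bohrExcessNumerator (M : ℕ) (ρ a : ℝ) : ℝ :=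
  (1 + a) * a ^ M * ρ ^ (M + 1) - (1 + ρ) * (1 - a * ρ) ^ M * (1 - 2 * a * ρ)

lemma bohrExcessNumerator_one (M : ℕ) (ρ : ℝ) :
    bohrExcessNumerator M ρ 1 = 2 * ρ ^ (M + 1) - (1 + ρ) * (1 - 2 * ρ) * (1 - ρ) ^ M := by
  simp only [bohrExcessNumerator]
  ring

lemma continuous_bohrExcessNumerator (M : ℕ) (ρ : ℝ) :
    Continuous (bohrExcessNumerator M ρ) := by
  unfold bohrExcessNumerator
  fun_prop

lemma bohr_sum_sub_one_eq (M : ℕ) {ρ a : ℝ} (hD : 1 - a * ρ ≠ 0) (hT : 1 - 2 * a * ρ ≠ 0) :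
    (a - ρ) / (1 - a * ρ)
        + (1 - a ^ 2) * a ^ M * ρ ^ (M + 1) / ((1 - a * ρ) ^ (M + 1) * (1 - 2 * a * ρ)) - 1
      = (1 - a) * bohrExcessNumerator M ρ a / ((1 - a * ρ) ^ (M + 1) * (1 - 2 * a * ρ)) := by
  rw [div_add_div _ _ hD (mul_ne_zero (pow_ne_zero _ hD) hT), div_sub_one (by positivity),
    div_eq_div_iff (by positivity) (by positivity), bohrExcessNumerator]
  ring

lemma root_poly_lt_of_lt (M : ℕ) {R ρ : ℝ} (hR : 0 ≤ R) (hRρ : R < ρ) (hρ : ρ < 1 / 2)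
    (hroot : (1 + R) * (1 - 2 * R) * (1 - R) ^ M = 2 * R ^ (M + 1)) :
    (1 + ρ) * (1 - 2 * ρ) * (1 - ρ) ^ M < 2 * ρ ^ (M + 1) := by
  have hquad : (1 + ρ) * (1 - 2 * ρ) < (1 + R) * (1 - 2 * R) := by nlinarith
  have hquadR : 0 < (1 + R) * (1 - 2 * R) := by nlinarith
  calc (1 + ρ) * (1 - 2 * ρ) * (1 - ρ) ^ M
      < (1 + R) * (1 - 2 * R) * (1 - ρ) ^ M := by gcongr; exact pow_pos (by linarith) M
    _ ≤ (1 + R) * (1 - 2 * R) * (1 - R) ^ M := by gcongr; linarith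
    _ = 2 * R ^ (M + 1) := hroot
    _ < 2 * ρ ^ (M + 1) := by gcongr

lemma exists_lt_one_bohrExcessNumerator_pos (M : ℕ) {ρ : ℝ} (hρ : ρ < 1 / 2)
    (hP : 0 < bohrExcessNumerator M ρ 1) :
    ∃ a : ℝ, 0 < a ∧ a < 1 ∧ a * ρ < 1 / 2 ∧ 0 < bohrExcessNumerator M ρ a := by
  have hPnear : ∀ᶠ a in 𝓝 (1 : ℝ), 0 < bohrExcessNumerator M ρ a :=
    continuousAt_const.eventually_lt (continuous_bohrExcessNumerator M ρ).continuousAt hP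
  have hprod : ∀ᶠ a in 𝓝 (1 : ℝ), a * ρ < 1 / 2 :=
    (continuous_id.mul continuous_const).continuousAt.eventually_lt continuousAt_const
      (by simpa using hρ)
  have hnear : ∀ᶠ a in 𝓝[<] (1 : ℝ),
      (0 < a ∧ a * ρ < 1 / 2 ∧ 0 < bohrExcessNumerator M ρ a) ∧ a < 1 :=
    (eventually_nhdsWithin_of_eventually_nhds
      ((eventually_gt_nhds one_pos).and (hprod.and hPnear))).and
      self_mem_nhdsWithin
  obtain ⟨a, ⟨ha0, haρ, hPa⟩, ha1⟩ := hnear.exists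
  exact ⟨a, ha0, ha1, haρ, hPa⟩

theorem bohr_polydisk_partials_first_sharp_general
    (N : ℕ) (hN : 2 ≤ N)
    (R : ℝ) (hR0 : 0 < R)
    (hroot : (1 + R) * (1 - 2 * R) * (1 - R) ^ (N - 1) - 2 * R ^ N = 0) :
    ∀ ρ : ℝ, R < ρ → ρ < 1 / 2 →
      ∃ a : ℝ, 0 ≤ a ∧ a < 1 ∧ a * ρ < 1 / 2 ∧
        (a - ρ) / (1 - a * ρ)
          + (1 - a ^ 2) * a ^ (N - 1) * ρ ^ N
              / ((1 - a * ρ) ^ N * (1 - 2 * a * ρ)) > 1 := by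
  intro ρ hRρ hρ
  obtain ⟨M, rfl⟩ : ∃ M, N = M + 1 := ⟨N - 1, by omega⟩
  rw [Nat.add_sub_cancel] at hroot ⊢
  have hP1 : 0 < bohrExcessNumerator M ρ 1 := by
    rw [bohrExcessNumerator_one]
    linarith [root_poly_lt_of_lt M hR0.le hRρ hρ (by linarith)]
  obtain ⟨a, ha0, ha1, haρ, hPa⟩ := exists_lt_one_bohrExcessNumerator_pos M hρ hP1
  have hD : 0 < 1 - a * ρ := by linarith
  have hT : 0 < 1 - 2 * a * ρ := by linarith
  refine ⟨a, ha0.le, ha1, haρ, sub_pos.mp ?_⟩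
  rw [bohr_sum_sub_one_eq M hD.ne' hT.ne']
  exact div_pos (mul_pos (by linarith) hPa) (mul_pos (pow_pos hD _) hT)

/-- **Sharpness of the radius `R̃_{n,N}` in the Bohr inequality for higher partial
derivatives.** For every `ρ` with `R̃_{n,N} < ρ < 1/2` there is `a ∈ [0,1)` with
`aρ < 1/2` such that
`(a-ρ)/(1-aρ) + (1-a²)a^{N-1}ρ^N/((1-aρ)^N(1-2aρ)) > 1`;
this quantity is the value of the Bohr sum for
`f(z) = (a - (z₁+⋯+z_n))/(1 - a(z₁+⋯+z_n))` at `z = (-r,…,-r)` with `nr = ρ`. -/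
theorem bohr_polydisk_partials_first_sharp
    (N : ℕ) (hN : 2 ≤ N)
    (R : ℝ) (hR0 : 0 < R) (hR12 : R < 1 / 2)
    (hroot : (1 + R) * (1 - 2 * R) * (1 - R) ^ (N - 1) - 2 * R ^ N = 0)
    (hmin : ∀ x : ℝ, 0 < x →
      (1 + x) * (1 - 2 * x) * (1 - x) ^ (N - 1) - 2 * x ^ N = 0 → R ≤ x) :
    ∀ ρ : ℝ, R < ρ → ρ < 1 / 2 →
      ∃ a : ℝ, 0 ≤ a ∧ a < 1 ∧ a * ρ < 1 / 2 ∧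
        (a - ρ) / (1 - a * ρ)
          + (1 - a ^ 2) * a ^ (N - 1) * ρ ^ N
              / ((1 - a * ρ) ^ N * (1 - 2 * a * ρ)) > 1 :=
  bohr_polydisk_partials_first_sharp_general N hN R hR0 hroot
end

section
/- Let n ≥ 1 and N ≥ 1 be integers, set t = ⌊(N−1)/2⌋, and let a ∈ [0,1). Consider the holomorphic function f(z) = (a − (z_1+…+z_n))/(1 − a(z_1+…+z_n)) on the polydisk of polyradius (1/n,…,1/n), whose Taylor coefficients satisfy: a_α = a·(coefficient for α = 0), and the kth homogeneous coefficients arise from the expansion f(z) = a − (1−a²)·Σ_{k=1}^∞ a^{k−1}(z_1+…+z_n)^k. Then for r = (r,…,r) with 0 ≤ nr < 1 and 𝐫 = r, the equality Σ_{k=N}^∞ Σ_{|α|=k} |a_α| r^α + sgn(t)·(Σ_{k=1}^t Σ_{|α|=k} |a_α|²)·(nr)^N/(1−nr) + (1/(1+a) + nr/(1−nr))·Σ_{k=t+1}^∞ Σ_{|α|=k} |a_α|² (nr)^{2k} = (1 − a²)·(nr)^N/(1 − nr) holds; i.e., the bound of the refined coefficient lemma is attained (it is sharp). -/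
open Finset

set_option maxHeartbeats 1000000 in
/-- **Sharpness of the refined coefficient lemma.**
For `a ∈ [0,1)`, the extremal function `f(z) = (a - (z₁+⋯+z_n))/(1 - a(z₁+⋯+z_n))`
has, after reduction to one variable, the Taylor coefficients `b₀ = a`,
`b_k = (1-a²)(-a)^{k-1}` for `k ≥ 1`, and at `r = (r,…,r)` with `0 ≤ nr < 1` the
refined coefficient bound is attained with equality:
`Σ_{k≥N} |b_k|(nr)^k + sgn(t)(Σ_{k=1}^t |b_k|²)(nr)^N/(1-nr)
  + (1/(1+a) + nr/(1-nr)) Σ_{k≥t+1} |b_k|²(nr)^{2k} = (1-a²)(nr)^N/(1-nr)`,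
where `t = ⌊(N-1)/2⌋`. -/
theorem refined_coefficient_lemma_sharp
    (n N : ℕ) (hn : 1 ≤ n) (hN : 1 ≤ N)
    (t : ℕ) (ht : t = (N - 1) / 2)
    (a : ℝ) (ha0 : 0 ≤ a) (ha1 : a < 1)
    (b : ℕ → ℝ) (hb0 : b 0 = a)
    (hbk : ∀ k : ℕ, b (k + 1) = (1 - a ^ 2) * (-a) ^ k)
    (r : ℝ) (hr : 0 ≤ r) (hnr : (n : ℝ) * r < 1) :
    (∑' k : ℕ, |b (N + k)| * ((n : ℝ) * r) ^ (N + k))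
      + (if t = 0 then (0 : ℝ) else 1)
          * (∑ k ∈ Finset.Icc 1 t, (b k) ^ 2)
          * ((n : ℝ) * r) ^ N / (1 - (n : ℝ) * r)
      + (1 / (1 + a) + (n : ℝ) * r / (1 - (n : ℝ) * r))
          * (∑' k : ℕ, (b (t + 1 + k)) ^ 2 * ((n : ℝ) * r) ^ (2 * (t + 1 + k)))
      = (1 - a ^ 2) * ((n : ℝ) * r) ^ N / (1 - (n : ℝ) * r) := by
  set x : ℝ := (n : ℝ) * r with hxdef
  have hx0 : 0 ≤ x := mul_nonneg (by positivity) hr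
  have hx1 : x < 1 := hnr
  clear hxdef hnr hr hn
  clear_value x
  have hax0 : 0 ≤ a * x := mul_nonneg ha0 hx0
  have hax1 : a * x < 1 := lt_of_le_of_lt (by nlinarith) hx1
  have h1x : (1 : ℝ) - x ≠ 0 := by nlinarith
  have h1ax : (1 : ℝ) - a * x ≠ 0 := by nlinarith
  have h1a : (1 : ℝ) + a ≠ 0 := by nlinarith
  have ha2 : a ^ 2 < 1 := by nlinarith
  have ha2ne : (a : ℝ) ^ 2 ≠ 1 := ne_of_lt ha2
  have ha2' : (0:ℝ) ≤ 1 - a ^ 2 := by nlinarith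
  have haxsq : a * x * (a * x) < 1 := by nlinarith
  have h1axsq : (1 : ℝ) - (a * x) * (a * x) ≠ 0 := by nlinarith
  obtain ⟨M, rfl⟩ : ∃ M, N = M + 1 := ⟨N - 1, by omega⟩
  -- Term 1
  have T1 : (∑' k : ℕ, |b (M + 1 + k)| * x ^ (M + 1 + k))
      = (1 - a ^ 2) * a ^ M * x ^ (M + 1) / (1 - a * x) := by
    have hterm : ∀ k : ℕ, |b (M + 1 + k)| * x ^ (M + 1 + k)
        = ((1 - a ^ 2) * a ^ M * x ^ (M + 1)) * (a * x) ^ k := by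
      intro k
      have h1 : M + 1 + k = (M + k) + 1 := by ring
      rw [h1, hbk]
      rw [abs_mul, abs_of_nonneg ha2', abs_pow, abs_neg, abs_of_nonneg ha0]
      rw [pow_add, pow_add, mul_pow]
      ring
    rw [tsum_congr hterm, tsum_mul_left, tsum_geometric_of_lt_one hax0 hax1]
    field_simp
  -- Term 3
  have T3 : (∑' k : ℕ, (b (t + 1 + k)) ^ 2 * x ^ (2 * (t + 1 + k)))
      = (1 - a ^ 2) ^ 2 * a ^ (2 * t) * x ^ (2 * t + 2) / (1 - (a * x) * (a * x)) := by
    have hterm : ∀ k : ℕ, (b (t + 1 + k)) ^ 2 * x ^ (2 * (t + 1 + k))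
        = ((1 - a ^ 2) ^ 2 * a ^ (2 * t) * x ^ (2 * t + 2)) * ((a * x) * (a * x)) ^ k := by
      intro k
      have h1 : t + 1 + k = (t + k) + 1 := by ring
      rw [h1, hbk, mul_pow]
      have h2 : ((-a : ℝ) ^ (t + k)) ^ 2 = (a ^ 2) ^ (t + k) := by
        rw [← pow_mul, mul_comm, pow_mul, neg_sq]
      rw [h2]
      rw [pow_add, mul_pow]
      have h3 : 2 * ((t + k) + 1) = (2 * t + 2) + 2 * k := by ring
      rw [h3, pow_add, pow_mul]
      ring
    rw [tsum_congr hterm, tsum_mul_left,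
      tsum_geometric_of_lt_one (mul_nonneg hax0 hax0) haxsq]
    field_simp
  -- Term 2
  have T2 : (if t = 0 then (0 : ℝ) else 1) * (∑ k ∈ Finset.Icc 1 t, (b k) ^ 2)
      = (1 - a ^ 2) * (1 - (a ^ 2) ^ t) := by
    rcases Nat.eq_zero_or_pos t with h0 | hpos
    · simp [h0]
    · rw [if_neg (by omega), one_mul]
      have hre : ∑ k ∈ Finset.Icc 1 t, (b k) ^ 2
          = ∑ k ∈ Finset.range t, (b (1 + k)) ^ 2 := by
        rw [← Finset.Ico_add_one_right_eq_Icc, Finset.sum_Ico_eq_sum_range]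
        simp
      rw [hre]
      have hre2 : ∀ k ∈ Finset.range t, (b (1 + k)) ^ 2 = (1 - a ^ 2) ^ 2 * (a ^ 2) ^ k := by
        intro k _
        rw [add_comm 1 k, hbk, mul_pow]
        congr 1
        rw [← pow_mul, mul_comm, pow_mul, neg_sq]
      rw [Finset.sum_congr rfl hre2, ← Finset.mul_sum, geom_sum_eq ha2ne,
        ← mul_div_assoc]
      rw [div_eq_iff (sub_ne_zero.mpr ha2ne)]
      ring
  rw [T1, T3, ← mul_assoc, T2]
  -- Parity split: N = 2t+1 or N = 2t+2, i.e. M = 2t or M = 2t+1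
  obtain hM | hM : M = 2 * t ∨ M = 2 * t + 1 := by omega
  all_goals subst hM
  all_goals rw [show (1:ℝ) - a * x * a * x = (1 - a * x) * (1 + a * x) by ring]
  all_goals have h2ax : (1:ℝ) + a * x ≠ 0 := by nlinarith
  all_goals field_simp [h1a, h1x, h1ax, h2ax]
  all_goals ring
end

section
/- Let n ≥ 1 be an integer and let f be holomorphic on the unit polydisk 𝔻ⁿ with |f(z)| ≤ 1 for all z ∈ 𝔻ⁿ. Then for all z ∈ 𝔻ⁿ the Euler derivative satisfies |Df(z)| ≤ n‖z‖_∞·(1 − |f(z)|²)/(1 − ‖z‖_∞²). -/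
/-!
Restricting `f` to the complex line through `z`, `λ ↦ f (λ z / ‖z‖)`, gives a holomorphic map of
the unit disc into the closed unit disc that takes `‖z‖` to `f z` and has derivative `Df(z) / ‖z‖`
there. The Schwarz–Pick lemma `|g'(a)| (1 - |a|²) ≤ 1 - |g(a)|²` for such maps `g`, at `a = ‖z‖`,
gives `|Df(z)| (1 - ‖z‖²) ≤ ‖z‖ (1 - |f(z)|²)`. Schwarz–Pick itself follows from the Schwarz
lemma after composing `g` on both sides with disc automorphisms `w ↦ (w - a) / (1 - ā w)` that move `a`
and `g a` to the origin; if `|g|` reaches `1` inside the disc, `g` is constant by maximum modulus.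
-/

open Metric Set ComplexConjugate

namespace Complex

noncomputable def diskMobius (a w : ℂ) : ℂ := (w - a) / (1 - conj a * w)

theorem normSq_one_sub_conj_mul_sub_normSq_sub (a w : ℂ) :
    normSq (1 - conj a * w) - normSq (w - a) = (1 - normSq a) * (1 - normSq w) := by
  simp only [normSq_apply, mul_re, mul_im, sub_re, sub_im, conj_re, conj_im, one_re, one_im]
  ring

theorem norm_sub_lt_norm_one_sub_conj_mul {a w : ℂ} (ha : ‖a‖ < 1) (hw : ‖w‖ < 1) :
    ‖w - a‖ < ‖1 - conj a * w‖ := by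
  have key := normSq_one_sub_conj_mul_sub_normSq_sub a w
  simp only [← Complex.sq_norm] at key
  refine lt_of_pow_lt_pow_left₀ 2 (norm_nonneg _) ?_
  nlinarith [mul_pos (by nlinarith [norm_nonneg a] : 0 < 1 - ‖a‖ ^ 2)
    (by nlinarith [norm_nonneg w] : 0 < 1 - ‖w‖ ^ 2)]

theorem one_sub_conj_mul_ne_zero {a w : ℂ} (ha : ‖a‖ < 1) (hw : ‖w‖ < 1) :
    1 - conj a * w ≠ 0 :=
  norm_pos_iff.mp ((norm_nonneg _).trans_lt (norm_sub_lt_norm_one_sub_conj_mul ha hw))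

theorem mapsTo_diskMobius {a : ℂ} (ha : ‖a‖ < 1) :
    MapsTo (diskMobius a) (ball 0 1) (ball 0 1) := by
  intro w hw
  rw [mem_ball_zero_iff] at hw ⊢
  rw [diskMobius, norm_div, div_lt_one ((norm_nonneg _).trans_lt
    (norm_sub_lt_norm_one_sub_conj_mul ha hw))]
  exact norm_sub_lt_norm_one_sub_conj_mul ha hw

theorem hasDerivAt_diskMobius {a w : ℂ} (hw : 1 - conj a * w ≠ 0) :
    HasDerivAt (diskMobius a) ((1 - conj a * a) / (1 - conj a * w) ^ 2) w := by
  have h := ((hasDerivAt_id w).sub_const a).div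
    (((hasDerivAt_id w).const_mul (conj a)).const_sub 1) hw
  exact h.congr_deriv (by simp only [id]; ring)

theorem differentiableOn_diskMobius {a : ℂ} (ha : ‖a‖ < 1) :
    DifferentiableOn ℂ (diskMobius a) (ball 0 1) := fun _ hw =>
  (hasDerivAt_diskMobius (one_sub_conj_mul_ne_zero ha (mem_ball_zero_iff.mp hw)))
    |>.differentiableAt.differentiableWithinAt

theorem norm_one_sub_conj_mul_self {a : ℂ} (ha : ‖a‖ ≤ 1) :
    ‖1 - conj a * a‖ = 1 - ‖a‖ ^ 2 := by
  rw [conj_mul', ← ofReal_pow, ← ofReal_one, ← ofReal_sub, norm_real, Real.norm_of_nonneg]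
  nlinarith [norm_nonneg a]

/-- The **Schwarz–Pick lemma** for holomorphic self-maps of the unit disc. -/
theorem norm_deriv_mul_le_of_mapsTo_ball {g : ℂ → ℂ} (hg : DifferentiableOn ℂ g (ball 0 1))
    (hmaps : MapsTo g (ball 0 1) (ball 0 1)) {a : ℂ} (ha : ‖a‖ < 1) :
    ‖deriv g a‖ * (1 - ‖a‖ ^ 2) ≤ 1 - ‖g a‖ ^ 2 := by
  set b := g a
  have hb : ‖b‖ < 1 := mem_ball_zero_iff.mp (hmaps (mem_ball_zero_iff.mpr ha))
  have hna : ‖-a‖ < 1 := by rwa [norm_neg]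
  set h := diskMobius b ∘ g ∘ diskMobius (-a)
  have h0 : diskMobius (-a) 0 = a := by simp [diskMobius]
  have hmaps_h : MapsTo h (ball 0 1) (ball 0 1) :=
    (mapsTo_diskMobius hb).comp (hmaps.comp (mapsTo_diskMobius hna))
  have hdiff_h : DifferentiableOn ℂ h (ball 0 1) :=
    (differentiableOn_diskMobius hb).comp
      (hg.comp (differentiableOn_diskMobius hna) (mapsTo_diskMobius hna))
      (hmaps.comp (mapsTo_diskMobius hna))
  have hh0 : h 0 = 0 := by simp [h, diskMobius, b]
  have hd_inner : HasDerivAt (diskMobius (-a)) (1 - conj a * a) 0 := by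
    simpa using hasDerivAt_diskMobius (a := -a) (w := 0) (by simp)
  have hd_g : HasDerivAt g (deriv g a) (diskMobius (-a) 0) := by
    rw [h0]
    exact (hg.differentiableAt (isOpen_ball.mem_nhds (mem_ball_zero_iff.mpr ha))).hasDerivAt
  have hd_outer : HasDerivAt (diskMobius b) (1 / (1 - conj b * b)) (g (diskMobius (-a) 0)) := by
    have hne := one_sub_conj_mul_ne_zero hb hb
    rw [h0]
    convert hasDerivAt_diskMobius hne using 1
    field_simp
  have hd_h : HasDerivAt h (deriv g a * (1 - conj a * a) / (1 - conj b * b)) 0 :=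
    (hd_outer.comp 0 (hd_g.comp 0 hd_inner)).congr_deriv (by ring)
  have schwarz : ‖deriv h 0‖ ≤ 1 :=
    norm_deriv_le_one_of_mapsTo_ball hdiff_h
      (by rw [hh0]; exact hmaps_h.mono_right ball_subset_closedBall) one_pos
  rw [hd_h.deriv, norm_div, norm_mul, norm_one_sub_conj_mul_self ha.le,
    norm_one_sub_conj_mul_self hb.le, div_le_one (by nlinarith [norm_nonneg b])] at schwarz
  exact schwarz

theorem norm_deriv_mul_le_of_mapsTo_closedBall {g : ℂ → ℂ}
    (hg : DifferentiableOn ℂ g (ball 0 1)) (hmaps : MapsTo g (ball 0 1) (closedBall 0 1))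
    {a : ℂ} (ha : ‖a‖ < 1) :
    ‖deriv g a‖ * (1 - ‖a‖ ^ 2) ≤ 1 - ‖g a‖ ^ 2 := by
  by_cases hopen : MapsTo g (ball 0 1) (ball 0 1)
  · exact norm_deriv_mul_le_of_mapsTo_ball hg hopen ha
  obtain ⟨c, hc, hgc⟩ := not_forall₂.mp hopen
  have hmax : IsMaxOn (norm ∘ g) (ball 0 1) c := fun x hx =>
    (mem_closedBall_zero_iff.mp (hmaps hx)).trans (not_lt.mp (mt mem_ball_zero_iff.mpr hgc))
  have hconst : g =ᶠ[nhds a] fun _ => g c :=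
    Filter.eventually_of_mem (isOpen_ball.mem_nhds (mem_ball_zero_iff.mpr ha))
      (eqOn_of_isPreconnected_of_isMaxOn_norm (convex_ball 0 1).isPreconnected isOpen_ball hg
        hc hmax)
  have hga : ‖g a‖ ≤ 1 := mem_closedBall_zero_iff.mp (hmaps (mem_ball_zero_iff.mpr ha))
  rw [hconst.deriv_eq, deriv_const, norm_zero, zero_mul]
  nlinarith [norm_nonneg (g a)]

end Complex

theorem norm_fderiv_apply_self_mul_le {E : Type*} [NormedAddCommGroup E] [NormedSpace ℂ E]
    {f : E → ℂ} (hf : DifferentiableOn ℂ f (ball 0 1))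
    (hmaps : MapsTo f (ball 0 1) (closedBall 0 1)) {z : E} (hz : ‖z‖ < 1) :
    ‖fderiv ℂ f z z‖ * (1 - ‖z‖ ^ 2) ≤ ‖z‖ * (1 - ‖f z‖ ^ 2) := by
  rcases eq_or_ne z 0 with rfl | hz0
  · simp
  set r : ℂ := ((‖z‖ : ℝ) : ℂ)
  have hr : r ≠ 0 := Complex.ofReal_ne_zero.mpr (norm_ne_zero_iff.mpr hz0)
  have hr_norm : ‖r‖ = ‖z‖ := by simp [r]
  set u : E := r⁻¹ • z
  have hu : ‖u‖ = 1 := by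
    rw [norm_smul, norm_inv, hr_norm, inv_mul_cancel₀ (norm_ne_zero_iff.mpr hz0)]
  have hz_eq : r • u = z := by rw [smul_smul, mul_inv_cancel₀ hr, one_smul]
  set g : ℂ → ℂ := fun w => f (w • u)
  have hline : MapsTo (fun w : ℂ => w • u) (ball 0 1) (ball 0 1) := fun w hw => by
    rw [mem_ball_zero_iff, norm_smul, hu, mul_one]
    exact mem_ball_zero_iff.mp hw
  have hg : DifferentiableOn ℂ g (ball 0 1) :=
    hf.comp (differentiable_id.smul_const u).differentiableOn hline
  have hgr : g r = f z := by simp only [g, hz_eq]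
  have hdg : HasDerivAt g (fderiv ℂ f z u) r := by
    have hfz : HasFDerivAt f (fderiv ℂ f (r • u)) (r • u) := by
      rw [hz_eq]
      exact (hf.differentiableAt (isOpen_ball.mem_nhds (mem_ball_zero_iff.mpr hz))).hasFDerivAt
    have hcomp := hfz.comp_hasDerivAt r ((hasDerivAt_id r).smul_const u)
    simp only [id, one_smul, hz_eq] at hcomp
    exact hcomp
  have hpick := Complex.norm_deriv_mul_le_of_mapsTo_closedBall hg (hmaps.comp hline)
    (hr_norm.trans_lt hz)
  rw [hdg.deriv, hgr, hr_norm] at hpick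
  have hDz : fderiv ℂ f z z = r * fderiv ℂ f z u := by
    rw [← smul_eq_mul, ← map_smul, hz_eq]
  calc ‖fderiv ℂ f z z‖ * (1 - ‖z‖ ^ 2) = ‖z‖ * (‖fderiv ℂ f z u‖ * (1 - ‖z‖ ^ 2)) := by
        rw [hDz, norm_mul, hr_norm, mul_assoc]
    _ ≤ ‖z‖ * (1 - ‖f z‖ ^ 2) := by gcongr

theorem setOf_forall_norm_lt_eq_ball {ι E : Type*} [Fintype ι] [SeminormedAddCommGroup E]
    {r : ℝ} (hr : 0 < r) : {w : ι → E | ∀ j, ‖w j‖ < r} = ball 0 r := by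
  ext w
  exact (pi_norm_lt_iff hr).symm.trans mem_ball_zero_iff.symm

theorem sum_mul_apply_single_eq {ι R F : Type*} [Fintype ι] [DecidableEq ι] [CommSemiring R]
    [FunLike F (ι → R) R] [LinearMapClass F R (ι → R) R] (L : F) (z : ι → R) :
    ∑ k, z k * L (Pi.single k 1) = L z := by
  conv_rhs => rw [pi_eq_sum_univ' z, map_sum]
  simp [smul_eq_mul]

/-- **Schwarz–Pick type bound for the Euler (radial) derivative on the polydisk.**
If `f` is holomorphic on `𝔻ⁿ` with `|f| ≤ 1` there, then for every `z ∈ 𝔻ⁿ`,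
`|Df(z)| ≤ n‖z‖_∞ (1 - |f(z)|²)/(1 - ‖z‖_∞²)`, where
`Df(z) = Σ_k z_k ∂f/∂z_k`. -/
theorem euler_derivative_bound_polydisk
    (n : ℕ) (hn : 1 ≤ n)
    (f : (Fin n → ℂ) → ℂ)
    (hf : DifferentiableOn ℂ f {w : Fin n → ℂ | ∀ j, ‖w j‖ < 1})
    (hb : ∀ w : Fin n → ℂ, (∀ j, ‖w j‖ < 1) → ‖f w‖ ≤ 1) :
    ∀ z : Fin n → ℂ, (∀ j, ‖z j‖ < 1) →
      ‖∑ k : Fin n, z k * fderiv ℂ f z (Pi.single k 1)‖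
        ≤ (n : ℝ) * ‖z‖ * (1 - ‖f z‖ ^ 2) / (1 - ‖z‖ ^ 2) := by
  intro z hz
  have hball := setOf_forall_norm_lt_eq_ball (ι := Fin n) (E := ℂ) one_pos
  have hmaps : MapsTo f (ball 0 1) (closedBall 0 1) := fun w hw =>
    mem_closedBall_zero_iff.mpr (hb w (hball.ge hw))
  have hz' : ‖z‖ < 1 := (pi_norm_lt_iff one_pos).mpr hz
  have hfz : ‖f z‖ ≤ 1 := hb z hz
  have key := norm_fderiv_apply_self_mul_le (hball ▸ hf) hmaps hz'
  rw [sum_mul_apply_single_eq, le_div_iff₀ (by nlinarith [norm_nonneg z])]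
  calc _ ≤ ‖z‖ * (1 - ‖f z‖ ^ 2) := key
    _ ≤ n * ‖z‖ * (1 - ‖f z‖ ^ 2) := by
      gcongr
      · nlinarith [norm_nonneg (f z)]
      · exact le_mul_of_one_le_left (norm_nonneg z) (by exact_mod_cast hn)
end

section
/- Let n ≥ 1 be an integer, let f(z) = Σ_α a_α z^α be holomorphic on the unit polydisk 𝔻ⁿ with |f(z)| ≤ 1 there, and let P_m(z) = Σ_{|α|=m} a_α z^α denote its homogeneous part of degree m. Then for every k = 0, 1, 2, … and every z ∈ 𝔻ⁿ: |a_0|² + |P_1(z)|² + … + |P_k(z)|² + |P_{2k+1}(z)| ≤ 1; and for every k = 1, 2, …: |a_0|² + |P_1(z)|² + … + |P_{k−1}(z)|² + |P_k(z)|²/(1+|a_0|) + |P_{2k}(z)| ≤ 1, where a_0 = a_{(0,…,0)} = f(0). -/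
/-!
Fix `z ∈ 𝔻ⁿ`. The slice `t ↦ f (t • z) = ∑ₘ Pₘ(z) tᵐ` is bounded by `1` on the unit disk, so it
suffices to prove both inequalities for the Taylor coefficients `cₘ` of a function `g` with
`|g| ≤ 1` on `𝔻`.

Multiplication by such a `g` does not increase the `ℓ²` norm of coefficients: for every
polynomial `w`, `∑ₘ |coeffₘ (g w)|² ≤ ∑ⱼ |wⱼ|²`. For `g(r ·)` with `r < 1` this follows from
Parseval's identity on the unit circle applied to `(truncation of g(r ·)) * w`, and then `r → 1`.

Carlson's inequalities come from the test polynomial `w = 1 + θ ∑_{j ≤ k} conj(cⱼ) X^(N - j)`,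
where `θ` is the phase of `c_N`: it leaves `c₀, …, c_k` as the low coefficients of `g w` and makes
the `N`-th one equal to `θ (|c_N| + ∑_{j ≤ k} |cⱼ|²)`. For `N = 2k + 1` this gives the first
inequality; for `N = 2k` the coefficient of `X^k` overlaps with `c_k` and is damped by
`1 / (1 + |c₀|)`.
-/

open Finset Filter Topology ComplexConjugate
open scoped Polynomial PowerSeries

theorem Polynomial.sum_norm_sq_coeff_le_sum_support (p : ℂ[X]) (E : Finset ℕ) :
    ∑ m ∈ E, ‖p.coeff m‖ ^ 2 ≤ ∑ i ∈ p.support, ‖p.coeff i‖ ^ 2 := by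
  rw [← Finset.sum_filter_of_ne (p := (· ∈ p.support)) fun m _ h => by simpa using h]
  exact Finset.sum_le_sum_of_subset_of_nonneg (fun m hm => (Finset.mem_filter.1 hm).2)
    fun _ _ _ => by positivity

theorem Polynomial.sum_norm_sq_coeff_mul_le (p q : ℂ[X]) {C : ℝ}
    (hp : ∀ t : ℂ, ‖t‖ = 1 → ‖p.eval t‖ ≤ C) :
    ∑ i ∈ (p * q).support, ‖(p * q).coeff i‖ ^ 2 ≤ C ^ 2 * ∑ i ∈ q.support, ‖q.coeff i‖ ^ 2 := by
  have hint : ∀ r : ℂ[X], CircleIntegrable (fun t => ‖r.eval t‖ ^ 2) 0 1 := fun r =>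
    (by fun_prop : Continuous fun t => ‖r.eval t‖ ^ 2).continuousOn.circleIntegrable zero_le_one
  rw [Polynomial.sum_sq_norm_coeff_eq_circleAverage, Polynomial.sum_sq_norm_coeff_eq_circleAverage,
    ← smul_eq_mul (C ^ 2), ← Real.circleAverage_fun_smul]
  refine Real.circleAverage_mono (hint _) (hint q).const_smul fun t ht => ?_
  have ht : ‖t‖ = 1 := by simpa using ht
  rw [Polynomial.eval_mul, norm_mul, mul_pow, smul_eq_mul]
  gcongr
  exact hp t ht

theorem norm_tsum_sub_sum_range_le {c : ℕ → ℂ} (hc : Summable fun m => ‖c m‖) {t : ℂ}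
    (ht : ‖t‖ ≤ 1) (T : ℕ) :
    ‖∑' m, c m * t ^ m - ∑ m ∈ range T, c m * t ^ m‖ ≤ ∑' m, ‖c (m + T)‖ := by
  have hle : ∀ m, ‖c m * t ^ m‖ ≤ ‖c m‖ := fun m => by
    rw [norm_mul, norm_pow]
    exact mul_le_of_le_one_right (norm_nonneg _) (pow_le_one₀ (norm_nonneg _) ht)
  rw [← (hc.of_norm_bounded hle).sum_add_tsum_nat_add T, add_sub_cancel_left]
  exact tsum_of_norm_bounded ((summable_nat_add_iff T).2 hc).hasSum fun m => hle (m + T)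

theorem sum_norm_sq_coeff_mul_le_of_summable {c : ℕ → ℂ} (hc : Summable fun m => ‖c m‖)
    (hbound : ∀ t : ℂ, ‖t‖ = 1 → ‖∑' m, c m * t ^ m‖ ≤ 1) (w : ℂ[X]) (E : Finset ℕ) :
    ∑ m ∈ E, ‖PowerSeries.coeff m (PowerSeries.mk c * (w : ℂ⟦X⟧))‖ ^ 2
      ≤ ∑ i ∈ w.support, ‖w.coeff i‖ ^ 2 := by
  set ε : ℕ → ℝ := fun T => ∑' m, ‖c (m + T)‖
  have hle_trunc : ∀ T, E ⊆ range T →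
      ∑ m ∈ E, ‖PowerSeries.coeff m (PowerSeries.mk c * (w : ℂ⟦X⟧))‖ ^ 2
        ≤ (1 + ε T) ^ 2 * ∑ i ∈ w.support, ‖w.coeff i‖ ^ 2 := by
    intro T hT
    set g := PowerSeries.trunc T (PowerSeries.mk c)
    have hcoeff : ∀ m ∈ E,
        PowerSeries.coeff m (PowerSeries.mk c * (w : ℂ⟦X⟧)) = (g * w).coeff m := by
      intro m hm
      have hmT := mem_range.1 (hT hm)
      rw [← Polynomial.coeff_coe, Polynomial.coe_mul,
        ← PowerSeries.coeff_coe_trunc_of_lt hmT (f := (g : ℂ⟦X⟧) * (w : ℂ⟦X⟧)),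
        PowerSeries.trunc_trunc_mul, PowerSeries.coeff_coe_trunc_of_lt hmT]
    have hg : ∀ t : ℂ, ‖t‖ = 1 → ‖g.eval t‖ ≤ 1 + ε T := by
      intro t ht
      have heval : g.eval t = ∑ m ∈ range T, c m * t ^ m := by
        simp [g, Polynomial.eval, PowerSeries.eval₂_trunc_eq_sum_range]
      calc ‖g.eval t‖ = ‖∑' m, c m * t ^ m - (∑' m, c m * t ^ m - g.eval t)‖ := by
            rw [sub_sub_cancel]
        _ ≤ 1 + ε T := (norm_sub_le _ _).trans
            (add_le_add (hbound t ht) (heval ▸ norm_tsum_sub_sum_range_le hc ht.le T))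
    calc ∑ m ∈ E, ‖PowerSeries.coeff m (PowerSeries.mk c * (w : ℂ⟦X⟧))‖ ^ 2
        = ∑ m ∈ E, ‖(g * w).coeff m‖ ^ 2 := sum_congr rfl fun m hm => by rw [hcoeff m hm]
      _ ≤ ∑ i ∈ (g * w).support, ‖(g * w).coeff i‖ ^ 2 :=
          (g * w).sum_norm_sq_coeff_le_sum_support E
      _ ≤ (1 + ε T) ^ 2 * ∑ i ∈ w.support, ‖w.coeff i‖ ^ 2 := g.sum_norm_sq_coeff_mul_le w hg
  have hε : Tendsto (fun T => (1 + ε T) ^ 2 * ∑ i ∈ w.support, ‖w.coeff i‖ ^ 2) atTop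
      (𝓝 ((1 + 0) ^ 2 * ∑ i ∈ w.support, ‖w.coeff i‖ ^ 2)) :=
    ((tendsto_const_nhds.add (tendsto_sum_nat_add fun m => ‖c m‖)).pow 2).mul_const _
  obtain ⟨T₀, hT₀⟩ := E.exists_nat_subset_range
  simpa using ge_of_tendsto hε (eventually_atTop.2 ⟨T₀, fun T hT => hle_trunc T
    (hT₀.trans (range_subset_range.2 hT))⟩)

theorem summable_norm_mul_pow_of_summable_mul_pow {c : ℕ → ℂ} {ρ r : ℝ}
    (hc : Summable fun m => c m * (ρ : ℂ) ^ m) (hr : 0 ≤ r) (hrρ : r < ρ) :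
    Summable fun m => ‖c m‖ * r ^ m := by
  have hρ : 0 < ρ := hr.trans_lt hrρ
  have hbdd := (hc.tendsto_atTop_zero.isBigO_one ℝ).norm_left
  refine summable_of_isBigO_nat
    (summable_geometric_of_lt_one (div_nonneg hr hρ.le) ((div_lt_one hρ).2 hrρ))
    ((hbdd.mul (Asymptotics.isBigO_refl (fun m => (r / ρ) ^ m) atTop)).congr
      (fun m => ?_) fun m => one_mul _)
  rw [norm_mul, norm_pow, Complex.norm_real, Real.norm_of_nonneg hρ.le, div_pow]
  field_simp

/-- Taylor coefficients of a Schur function, i.e. of a function bounded by `1` on the unit disk. -/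
def IsSchurCoeffs (c : ℕ → ℂ) : Prop :=
  ∀ t : ℂ, ‖t‖ < 1 → ∃ s, ‖s‖ ≤ 1 ∧ HasSum (fun m => c m * t ^ m) s

theorem IsSchurCoeffs.summable_norm_mul_pow {c : ℕ → ℂ} (hc : IsSchurCoeffs c) {r : ℝ}
    (hr : 0 ≤ r) (hr1 : r < 1) : Summable fun m => ‖c m * (r : ℂ) ^ m‖ := by
  obtain ⟨s, -, hs⟩ := hc ((1 + r) / 2 : ℝ) (by
    rw [Complex.norm_real, Real.norm_of_nonneg (by positivity)]; linarith)
  simpa [norm_mul, norm_pow, Complex.norm_real, Real.norm_of_nonneg hr] using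
    summable_norm_mul_pow_of_summable_mul_pow hs.summable hr (by linarith)

theorem IsSchurCoeffs.sum_norm_sq_coeff_mul_le {c : ℕ → ℂ} (hc : IsSchurCoeffs c)
    (w : ℂ[X]) (E : Finset ℕ) :
    ∑ m ∈ E, ‖PowerSeries.coeff m (PowerSeries.mk c * (w : ℂ⟦X⟧))‖ ^ 2
      ≤ ∑ i ∈ w.support, ‖w.coeff i‖ ^ 2 := by
  set F : ℝ → ℝ := fun r => ∑ m ∈ E,
    ‖PowerSeries.coeff m (PowerSeries.mk (fun i => c i * (r : ℂ) ^ i) * (w : ℂ⟦X⟧))‖ ^ 2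
  have hF : Continuous F := by
    simp only [F, PowerSeries.coeff_mul, PowerSeries.coeff_mk, Polynomial.coeff_coe]
    fun_prop
  have hle : ∀ r ∈ Set.Ioo (0 : ℝ) 1, F r ≤ ∑ i ∈ w.support, ‖w.coeff i‖ ^ 2 := by
    rintro r ⟨hr0, hr1⟩
    refine sum_norm_sq_coeff_mul_le_of_summable (hc.summable_norm_mul_pow hr0.le hr1)
      (fun t ht => ?_) w E
    obtain ⟨s, hs1, hs⟩ := hc (r * t) (by
      rw [norm_mul, ht, mul_one, Complex.norm_real, Real.norm_of_nonneg hr0.le]; exact hr1)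
    simp_rw [mul_assoc, ← mul_pow]
    rwa [hs.tsum_eq]
  have := le_of_tendsto ((hF.tendsto 1).mono_left nhdsWithin_le_nhds)
    (eventually_of_mem (Ioo_mem_nhdsLT one_pos) hle)
  simpa [F] using this

theorem PowerSeries.coeff_mk_mul_one_add_sum_monomial (c : ℕ → ℂ) (s : Finset ℕ) (e : ℕ → ℕ)
    (a : ℕ → ℂ) (m : ℕ) :
    PowerSeries.coeff m (PowerSeries.mk c *
      ((1 + ∑ j ∈ s, Polynomial.monomial (e j) (a j) : ℂ[X]) : ℂ⟦X⟧)) =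
      c m + ∑ j ∈ s, if e j ≤ m then a j * c (m - e j) else 0 := by
  rw [← Polynomial.coeToPowerSeries.ringHom_apply]
  simp only [← Polynomial.C_mul_X_pow_eq_monomial, map_add, map_one, map_sum, map_mul, map_pow,
    Polynomial.coeToPowerSeries.ringHom_apply, Polynomial.coe_X, Polynomial.coe_C, mul_add,
    mul_one, Finset.mul_sum, PowerSeries.coeff_mk, mul_left_comm _ (PowerSeries.C _),
    PowerSeries.coeff_C_mul, PowerSeries.coeff_mul_X_pow', mul_ite, mul_zero]

theorem Polynomial.sum_norm_sq_coeff_one_add_sum_monomial {s : Finset ℕ} {e : ℕ → ℕ}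
    (he : Set.InjOn e s) (he0 : ∀ j ∈ s, e j ≠ 0) (a : ℕ → ℂ) :
    ∑ i ∈ (1 + ∑ j ∈ s, Polynomial.monomial (e j) (a j)).support,
      ‖(1 + ∑ j ∈ s, Polynomial.monomial (e j) (a j)).coeff i‖ ^ 2 = 1 + ∑ j ∈ s, ‖a j‖ ^ 2 := by
  set w := 1 + ∑ j ∈ s, Polynomial.monomial (e j) (a j)
  have hcoeff : ∀ i,
      w.coeff i = (if i = 0 then 1 else 0) + ∑ j ∈ s, if e j = i then a j else 0 := by
    intro i
    simp [w, Polynomial.coeff_one, Polynomial.coeff_monomial]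
  have hshift : ∀ j ∈ s, w.coeff (e j) = a j := by
    intro j hj
    rw [hcoeff, if_neg (he0 j hj), zero_add, Finset.sum_eq_single j
      (fun j' hj' hne => if_neg fun h => hne (he hj' hj h)) (fun h => absurd hj h), if_pos rfl]
  have h0 : w.coeff 0 = 1 := by
    rw [hcoeff, if_pos rfl, Finset.sum_eq_zero fun j hj => if_neg (he0 j hj), add_zero]
  have hsupp : w.support ⊆ insert 0 (s.image e) := by
    intro i hi
    by_contra h
    simp only [Finset.mem_insert, Finset.mem_image, not_or, not_exists, not_and] at h
    exact Polynomial.mem_support_iff.1 hi (by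
      rw [hcoeff, if_neg h.1, zero_add]
      exact Finset.sum_eq_zero fun j hj => if_neg (h.2 j hj))
  rw [Finset.sum_subset hsupp fun i _ hi => by rw [Polynomial.notMem_support_iff.1 hi]; simp,
    Finset.sum_insert (by simpa using he0), Finset.sum_image he, h0,
    norm_one, one_pow]
  exact congrArg _ (Finset.sum_congr rfl fun j hj => by rw [hshift j hj])

theorem IsSchurCoeffs.sum_norm_sq_add_sum_shift_le {c : ℕ → ℂ} (hc : IsSchurCoeffs c)
    {s : Finset ℕ} {e : ℕ → ℕ} (he : Set.InjOn e s) (he0 : ∀ j ∈ s, e j ≠ 0) (a : ℕ → ℂ)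
    (E : Finset ℕ) :
    ∑ m ∈ E, ‖c m + ∑ j ∈ s, if e j ≤ m then a j * c (m - e j) else 0‖ ^ 2
      ≤ 1 + ∑ j ∈ s, ‖a j‖ ^ 2 := by
  simpa only [PowerSeries.coeff_mk_mul_one_add_sum_monomial,
    Polynomial.sum_norm_sq_coeff_one_add_sum_monomial he he0] using
    hc.sum_norm_sq_coeff_mul_le (1 + ∑ j ∈ s, Polynomial.monomial (e j) (a j)) E

theorem Complex.exists_norm_eq_one_and_eq_mul_norm (z : ℂ) : ∃ θ : ℂ, ‖θ‖ = 1 ∧ z = θ * ‖z‖ :=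
  ⟨_, norm_exp_ofReal_mul_I _, by rw [mul_comm, norm_mul_exp_arg_mul_I]⟩

theorem IsSchurCoeffs.sq_add_sum_norm_sq_le {c : ℕ → ℂ} (hc : IsSchurCoeffs c) {N k : ℕ}
    (hkN : k < N) (μ : ℕ → ℝ) {θ : ℂ} (hθ : ‖θ‖ = 1) (hcθ : c N = θ * ‖c N‖) {E : Finset ℕ}
    (hE : N ∉ E) :
    (‖c N‖ + ∑ j ∈ range (k + 1), μ j * ‖c j‖ ^ 2) ^ 2 + ∑ m ∈ E, ‖c m + ∑ j ∈ range (k + 1),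
        if N - j ≤ m then θ * conj (c j) * μ j * c (m - (N - j)) else 0‖ ^ 2
      ≤ 1 + ∑ j ∈ range (k + 1), μ j ^ 2 * ‖c j‖ ^ 2 := by
  have h := hc.sum_norm_sq_add_sum_shift_le (s := range (k + 1)) (e := fun j => N - j)
    (fun i hi j hj hij => by simp only [coe_range, Set.mem_Iio] at hi hj hij; omega)
    (fun j hj => by simp only [mem_range] at hj; omega) (fun j => θ * conj (c j) * μ j)
    (insert N E)
  have htop : c N + (∑ j ∈ range (k + 1),
      if N - j ≤ N then θ * conj (c j) * μ j * c (N - (N - j)) else 0)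
        = θ * ((‖c N‖ + ∑ j ∈ range (k + 1), μ j * ‖c j‖ ^ 2 : ℝ) : ℂ) := by
    have hterm : ∀ j, θ * conj (c j) * μ j * c j = θ * ((μ j * ‖c j‖ ^ 2 : ℝ) : ℂ) := fun j => by
      push_cast
      rw [← Complex.conj_mul']
      ring
    rw [sum_congr rfl fun j hj => by
      rw [if_pos (Nat.sub_le _ _), Nat.sub_sub_self (by simp only [mem_range] at hj; omega),
        hterm], ← mul_sum]
    conv_lhs => rw [hcθ]
    push_cast
    ring
  rw [sum_insert hE, htop] at h
  simpa only [norm_mul, hθ, one_mul, RCLike.norm_conj, Complex.norm_real, Real.norm_eq_abs,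
    sq_abs, mul_pow, mul_comm (‖c _‖ ^ 2)] using h

theorem IsSchurCoeffs.sum_range_sq_add_norm_le_one {c : ℕ → ℂ} (hc : IsSchurCoeffs c) (k : ℕ) :
    ∑ m ∈ range (k + 1), ‖c m‖ ^ 2 + ‖c (2 * k + 1)‖ ≤ 1 := by
  obtain ⟨θ, hθ, hcθ⟩ := Complex.exists_norm_eq_one_and_eq_mul_norm (c (2 * k + 1))
  have h := hc.sq_add_sum_norm_sq_le (k := k) (by omega) (fun _ => 1) hθ hcθ
    (E := range (k + 1)) (by simp only [mem_range]; omega)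
  have hlow : ∀ m ∈ range (k + 1), ‖c m + ∑ j ∈ range (k + 1), if 2 * k + 1 - j ≤ m
      then θ * conj (c j) * ((1 : ℝ) : ℂ) * c (m - (2 * k + 1 - j)) else 0‖ ^ 2 = ‖c m‖ ^ 2 :=
    fun m hm => by
      rw [sum_eq_zero fun j hj => if_neg (by simp only [mem_range] at hm hj; omega), add_zero]
  simp only [sum_congr rfl hlow, one_mul, one_pow, add_le_add_iff_right] at h
  linarith [(pow_le_one_iff_of_nonneg (by positivity) two_ne_zero).1 h]

theorem norm_div_one_add_le_norm_add_mul {u v x : ℂ} (hx : ‖x‖ ≤ ‖u‖ / (1 + ‖v‖)) :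
    ‖u‖ / (1 + ‖v‖) ≤ ‖u + x * v‖ := by
  have h : ‖u‖ / (1 + ‖v‖) = ‖u‖ - ‖u‖ / (1 + ‖v‖) * ‖v‖ := by
    field_simp
    ring
  calc ‖u‖ / (1 + ‖v‖) ≤ ‖u‖ - ‖x‖ * ‖v‖ := by
        rw [h]; gcongr
    _ ≤ ‖u + x * v‖ := by
        rw [← norm_mul]; exact norm_sub_le_norm_add _ _

theorem IsSchurCoeffs.sum_range_sq_add_sq_div_add_norm_le_one {c : ℕ → ℂ} (hc : IsSchurCoeffs c)
    {k : ℕ} (hk : 1 ≤ k) :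
    ∑ m ∈ range k, ‖c m‖ ^ 2 + ‖c k‖ ^ 2 / (1 + ‖c 0‖) + ‖c (2 * k)‖ ≤ 1 := by
  obtain ⟨θ, hθ, hcθ⟩ := Complex.exists_norm_eq_one_and_eq_mul_norm (c (2 * k))
  -- damping the `j = k` term keeps the coefficient of `X^k` at least `‖c k‖ / (1 + ‖c 0‖)`
  set μ : ℕ → ℝ := fun j => if j < k then 1 else (1 + ‖c 0‖)⁻¹
  have hμ : ∀ j ∈ range k, μ j = 1 := fun j hj => if_pos (mem_range.1 hj)
  have hμk : μ k = (1 + ‖c 0‖)⁻¹ := if_neg (lt_irrefl k)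
  have h := hc.sq_add_sum_norm_sq_le (k := k) (by omega) μ hθ hcθ (E := insert k (range k))
    (by simp only [mem_insert, mem_range]; omega)
  have hlow : ∀ m ∈ range k, ‖c m + ∑ j ∈ range (k + 1),
      if 2 * k - j ≤ m then θ * conj (c j) * μ j * c (m - (2 * k - j)) else 0‖ ^ 2 = ‖c m‖ ^ 2 :=
    fun m hm => by
      rw [sum_eq_zero fun j hj => if_neg (by simp only [mem_range] at hm hj; omega), add_zero]
  have hmid : c k + (∑ j ∈ range (k + 1),
      if 2 * k - j ≤ k then θ * conj (c j) * μ j * c (k - (2 * k - j)) else 0)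
        = c k + θ * conj (c k) * μ k * c 0 := by
    rw [sum_range_succ, sum_eq_zero fun j hj => if_neg (by simp only [mem_range] at hj; omega),
      zero_add, if_pos (by omega), show k - (2 * k - k) = 0 by omega]
  have hP : ∑ j ∈ range k, μ j * ‖c j‖ ^ 2 = ∑ j ∈ range k, ‖c j‖ ^ 2 :=
    sum_congr rfl fun j hj => by rw [hμ j hj, one_mul]
  have hP' : ∑ j ∈ range k, μ j ^ 2 * ‖c j‖ ^ 2 = ∑ j ∈ range k, ‖c j‖ ^ 2 :=
    sum_congr rfl fun j hj => by rw [hμ j hj, one_pow, one_mul]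
  rw [sum_insert (by simp), hmid, sum_congr rfl hlow, sum_range_succ, sum_range_succ, hP, hP',
    hμk] at h
  have hmid_ge : ‖c k‖ / (1 + ‖c 0‖) ≤ ‖c k + θ * conj (c k) * ((1 + ‖c 0‖)⁻¹ : ℝ) * c 0‖ :=
    norm_div_one_add_le_norm_add_mul (by
      rw [norm_mul, norm_mul, hθ, one_mul, RCLike.norm_conj, Complex.norm_real,
        Real.norm_of_nonneg (by positivity), div_eq_mul_inv])
  have hsq : (‖c (2 * k)‖ + (∑ m ∈ range k, ‖c m‖ ^ 2 + (1 + ‖c 0‖)⁻¹ * ‖c k‖ ^ 2)) ^ 2 ≤ 1 := by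
    have hD : (1 + ‖c 0‖)⁻¹ ^ 2 * ‖c k‖ ^ 2 = (‖c k‖ / (1 + ‖c 0‖)) ^ 2 := by ring
    linarith [pow_le_pow_left₀ (by positivity) hmid_ge 2]
  rw [div_eq_inv_mul]
  linarith [(pow_le_one_iff_of_nonneg (by positivity) two_ne_zero).1 hsq]

theorem isSchurCoeffs_homogeneous_parts {n : ℕ} {f : (Fin n → ℂ) → ℂ} {a : (Fin n → ℕ) → ℂ}
    (hb : ∀ w : Fin n → ℂ, (∀ j, ‖w j‖ < 1) → ‖f w‖ ≤ 1)
    (hrep : ∀ w : Fin n → ℂ, (∀ j, ‖w j‖ < 1) →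
      HasSum (fun α : Fin n → ℕ => a α * ∏ j, w j ^ α j) (f w))
    {z : Fin n → ℂ} (hz : ∀ j, ‖z j‖ < 1) :
    IsSchurCoeffs fun m => ∑ α ∈ Finset.Nat.antidiagonalTuple n m, a α * ∏ j, z j ^ α j := by
  intro t ht
  have htz : ∀ j, ‖(t • z) j‖ < 1 := fun j => by
    rw [Pi.smul_apply, smul_eq_mul, norm_mul]
    exact mul_lt_one_of_nonneg_of_lt_one_left (norm_nonneg _) ht (hz j).le
  have hfiber : ∀ m, (fun α : Fin n → ℕ => ∑ j, α j) ⁻¹' {m} = Finset.Nat.antidiagonalTuple n m :=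
    fun m => by ext α; simp [Finset.Nat.mem_antidiagonalTuple]
  have hterm : ∀ m, ∑' α : ↑((fun α : Fin n → ℕ => ∑ j, α j) ⁻¹' {m}),
      a α * ∏ j, (t • z) j ^ (α : Fin n → ℕ) j
        = (∑ α ∈ Finset.Nat.antidiagonalTuple n m, a α * ∏ j, z j ^ α j) * t ^ m := fun m => by
    rw [hfiber, Finset.tsum_subtype' _ fun α => a α * ∏ j, (t • z) j ^ α j, sum_mul]
    refine sum_congr rfl fun α hα => ?_
    rw [← Finset.Nat.mem_antidiagonalTuple.1 hα]
    simp only [Pi.smul_apply, smul_eq_mul, mul_pow, prod_mul_distrib, prod_pow_eq_pow_sum]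
    ring
  exact ⟨f (t • z), hb _ htz,
    by simpa only [hterm] using (hrep _ htz).tsum_fiberwise fun α => ∑ j, α j⟩

theorem Finset.sum_range_succ_eq_add_sum_Icc {M : Type*} [AddCommMonoid M] (g : ℕ → M) (k : ℕ) :
    ∑ m ∈ range (k + 1), g m = g 0 + ∑ i ∈ Icc 1 k, g i := by
  rw [Nat.range_succ_eq_Icc_zero, ← add_sum_Ioc_eq_sum_Icc k.zero_le]
  rfl

theorem carlson_homogeneous_polydisk_general
    (n : ℕ)
    (f : (Fin n → ℂ) → ℂ) (a : (Fin n → ℕ) → ℂ)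
    (hb : ∀ w : Fin n → ℂ, (∀ j, ‖w j‖ < 1) → ‖f w‖ ≤ 1)
    (hrep : ∀ w : Fin n → ℂ, (∀ j, ‖w j‖ < 1) →
      HasSum (fun α : Fin n → ℕ => a α * ∏ j, w j ^ α j) (f w))
    (P : ℕ → (Fin n → ℂ) → ℂ)
    (hP : ∀ (m : ℕ) (w : Fin n → ℂ),
      P m w = ∑ α ∈ Finset.Nat.antidiagonalTuple n m, a α * ∏ j, w j ^ α j) :
    ∀ z : Fin n → ℂ, (∀ j, ‖z j‖ < 1) →
      (∀ k : ℕ,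
        ‖a 0‖ ^ 2 + (∑ i ∈ Finset.Icc 1 k, ‖P i z‖ ^ 2) + ‖P (2 * k + 1) z‖ ≤ 1)
      ∧ (∀ k : ℕ, 1 ≤ k →
        ‖a 0‖ ^ 2 + (∑ i ∈ Finset.Icc 1 (k - 1), ‖P i z‖ ^ 2)
          + ‖P k z‖ ^ 2 / (1 + ‖a 0‖) + ‖P (2 * k) z‖ ≤ 1) := by
  intro z hz
  have hc : IsSchurCoeffs fun m => P m z := by
    simpa only [hP] using isSchurCoeffs_homogeneous_parts hb hrep hz
  have hP0 : P 0 z = a 0 := by simp [hP, Finset.Nat.antidiagonalTuple_zero_right]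
  refine ⟨fun k => ?_, fun k hk => ?_⟩
  · simpa only [sum_range_succ_eq_add_sum_Icc, hP0] using hc.sum_range_sq_add_norm_le_one k
  · obtain ⟨k, rfl⟩ := Nat.exists_eq_add_of_le' hk
    simpa only [sum_range_succ_eq_add_sum_Icc, hP0, Nat.add_sub_cancel] using
      hc.sum_range_sq_add_sq_div_add_norm_le_one hk

/-- **Carlson-type inequalities for homogeneous parts on the polydisk.**
For a holomorphic `f(z) = Σ_α a_α z^α` with `|f| ≤ 1` on `𝔻ⁿ` and homogeneous parts
`P_m(z) = Σ_{|α|=m} a_α z^α`, for every `z ∈ 𝔻ⁿ`: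
`|a₀|² + |P₁(z)|² + ⋯ + |P_k(z)|² + |P_{2k+1}(z)| ≤ 1` for all `k ≥ 0`, and
`|a₀|² + |P₁(z)|² + ⋯ + |P_{k-1}(z)|² + |P_k(z)|²/(1+|a₀|) + |P_{2k}(z)| ≤ 1`
for all `k ≥ 1`. -/
theorem carlson_homogeneous_polydisk
    (n : ℕ) (hn : 1 ≤ n)
    (f : (Fin n → ℂ) → ℂ) (a : (Fin n → ℕ) → ℂ)
    (hf : DifferentiableOn ℂ f {w : Fin n → ℂ | ∀ j, ‖w j‖ < 1})
    (hb : ∀ w : Fin n → ℂ, (∀ j, ‖w j‖ < 1) → ‖f w‖ ≤ 1)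
    (hrep : ∀ w : Fin n → ℂ, (∀ j, ‖w j‖ < 1) →
      HasSum (fun α : Fin n → ℕ => a α * ∏ j, w j ^ α j) (f w))
    (P : ℕ → (Fin n → ℂ) → ℂ)
    (hP : ∀ (m : ℕ) (w : Fin n → ℂ),
      P m w = ∑ α ∈ Finset.Nat.antidiagonalTuple n m, a α * ∏ j, w j ^ α j) :
    ∀ z : Fin n → ℂ, (∀ j, ‖z j‖ < 1) →
      (∀ k : ℕ,
        ‖a 0‖ ^ 2 + (∑ i ∈ Finset.Icc 1 k, ‖P i z‖ ^ 2) + ‖P (2 * k + 1) z‖ ≤ 1)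
      ∧ (∀ k : ℕ, 1 ≤ k →
        ‖a 0‖ ^ 2 + (∑ i ∈ Finset.Icc 1 (k - 1), ‖P i z‖ ^ 2)
          + ‖P k z‖ ^ 2 / (1 + ‖a 0‖) + ‖P (2 * k) z‖ ≤ 1) :=
  carlson_homogeneous_polydisk_general n f a hb hrep P hP
end
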